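/- arXiv:2207.13924 — 5 statements merged into one kernel-verified Lean document; each statement's English description precedes it below -/
import Mathlib

section
/- Let W be an N×N symmetric doubly stochastic matrix with positive diagonal entries whose associated graph is connected. Then the spectral norm of W − (1/N)𝟙𝟙ᵀ is strictly less than 1, where 𝟙 is the all-ones vector in ℝ^N. -/
/-!
If `W` is doubly stochastic, a row-wise variance identity together with the column sums gives
`‖y‖² - ‖W y‖² = ∑ i, ∑ j, W i j * (y j - (W y) i)²`. If this vanishes, the positive diagonal
forces `y j = (W y) i = y i` whenever `W i j > 0`, so `y` is constant along the edges of the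
connected graph, hence constant, hence zero when `∑ i, y i = 0`. Since `W 𝟙 = 𝟙`, the matrix
`W - 𝟙𝟙ᵀ/N` sends `x` to `W` applied to the centered vector `x - x̄𝟙`, which is no longer than
`x`; so `W - 𝟙𝟙ᵀ/N` strictly shrinks every nonzero vector, and compactness of the unit sphere
turns this into an operator norm `< 1`.
-/

open Matrix Finset

theorem SimpleGraph.Preconnected.apply_eq_of_forall_adj {V α : Type*} {G : SimpleGraph V}
    (hG : G.Preconnected) {f : V → α} (hf : ∀ a b, G.Adj a b → f a = f b) (a b : V) :
    f a = f b := by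
  obtain ⟨w⟩ := hG a b
  induction w with
  | nil => rfl
  | cons hadj _ ih => exact (hf _ _ hadj).trans ih

theorem ContinuousLinearMap.opNorm_lt_one_of_norm_apply_lt {E F : Type*}
    [NormedAddCommGroup E] [NormedSpace ℝ E] [FiniteDimensional ℝ E]
    [NormedAddCommGroup F] [NormedSpace ℝ F] (T : E →L[ℝ] F)
    (hT : ∀ x, x ≠ 0 → ‖T x‖ < ‖x‖) : ‖T‖ < 1 := by
  rcases (Metric.sphere (0 : E) 1).eq_empty_or_nonempty with hempty | hne
  · have : ‖T‖ ≤ 0 := opNorm_le_of_unit_norm le_rfl fun x hx =>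
      absurd (mem_sphere_zero_iff_norm.mpr hx) (hempty ▸ Set.notMem_empty x)
    linarith
  · obtain ⟨x₀, hx₀, hmax⟩ :=
      (isCompact_sphere (0 : E) 1).exists_isMaxOn hne T.continuous.norm.continuousOn
    rw [mem_sphere_zero_iff_norm] at hx₀
    calc ‖T‖ ≤ ‖T x₀‖ := opNorm_le_of_unit_norm (norm_nonneg _) fun x hx =>
          hmax (mem_sphere_zero_iff_norm.mpr hx)
      _ < ‖x₀‖ := hT x₀ (norm_ne_zero_iff.mp (hx₀ ▸ one_ne_zero))
      _ = 1 := hx₀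

namespace Finset

variable {ι : Type*} [Fintype ι]

theorem sq_sum_mul_add_sum_mul_sq_sub (w y : ι → ℝ) (hw : ∑ j, w j = 1) :
    (∑ j, w j * y j) ^ 2 + ∑ j, w j * (y j - ∑ k, w k * y k) ^ 2 = ∑ j, w j * y j ^ 2 := by
  set m := ∑ k, w k * y k
  have hexpand : ∀ j, w j * (y j - m) ^ 2 = w j * y j ^ 2 - 2 * m * (w j * y j) + m ^ 2 * w j :=
    fun j => by ring
  simp only [hexpand, sum_add_distrib, sum_sub_distrib, ← mul_sum, hw]
  ring

theorem sum_sq_le_sum_add_sq {y : ι → ℝ} (hy : ∑ i, y i = 0) (c : ℝ) :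
    ∑ i, y i ^ 2 ≤ ∑ i, (y i + c) ^ 2 := by
  have hexpand :
      ∑ i, (y i + c) ^ 2 = ∑ i, y i ^ 2 + 2 * c * ∑ i, y i + Fintype.card ι * c ^ 2 := by
    simp only [add_sq, sum_add_distrib, ← sum_mul, ← mul_sum, sum_const, card_univ, nsmul_eq_mul]
    ring
  rw [hexpand, hy]; nlinarith [sq_nonneg c]

theorem sum_sq_pos_of_ne_zero {x : ι → ℝ} (hx : x ≠ 0) :
    0 < ∑ i, x i ^ 2 := by
  obtain ⟨i, hi⟩ := Function.ne_iff.mp hx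
  exact sum_pos' (fun j _ => sq_nonneg _) ⟨i, mem_univ i, pow_two_pos_of_ne_zero hi⟩

end Finset

section Centering

variable {ι : Type*} [Fintype ι]

noncomputable def centered (x : ι → ℝ) : ι → ℝ := fun i => x i - (∑ j, x j) / Fintype.card ι

theorem sum_centered (x : ι → ℝ) : ∑ i, centered x i = 0 := by
  rcases isEmpty_or_nonempty ι with _ | _
  · simp
  · simp [centered, sum_sub_distrib, mul_div_cancel₀]

theorem sum_sq_centered_le (x : ι → ℝ) : ∑ i, centered x i ^ 2 ≤ ∑ i, x i ^ 2 := by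
  simpa [centered] using sum_sq_le_sum_add_sq (sum_centered x) ((∑ j, x j) / Fintype.card ι)

end Centering

namespace Matrix

variable {n : Type*} [Fintype n] {W : Matrix n n ℝ}

theorem mulVec_centered (hrow : W *ᵥ 1 = 1) (x : n → ℝ) :
    W *ᵥ centered x = (W - (Fintype.card n : ℝ)⁻¹ • of fun _ _ => (1 : ℝ)) *ᵥ x := by
  have hcentered : centered x = x - ((∑ j, x j) / Fintype.card n) • 1 := by
    ext i; simp [centered]
  rw [hcentered, mulVec_sub, mulVec_smul, hrow, sub_mulVec]
  ext i
  simp [mulVec, dotProduct, ← mul_sum, div_eq_inv_mul]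

variable [DecidableEq n]

theorem sum_sq_mulVec_add_sum_mul_sq_sub (hW : W ∈ doublyStochastic ℝ n) (y : n → ℝ) :
    ∑ i, (W *ᵥ y) i ^ 2 + ∑ i, ∑ j, W i j * (y j - (W *ᵥ y) i) ^ 2 = ∑ i, y i ^ 2 :=
  calc _ = ∑ i, ∑ j, W i j * y j ^ 2 := by
        rw [← sum_add_distrib]
        exact sum_congr rfl fun i _ =>
          sq_sum_mul_add_sum_mul_sq_sub (W i) y (sum_row_of_mem_doublyStochastic hW i)
    _ = ∑ j, y j ^ 2 := by
        rw [sum_comm]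
        simp only [← sum_mul, sum_col_of_mem_doublyStochastic hW, one_mul]

theorem apply_eq_mulVec_apply_of_sum_sq_le (hW : W ∈ doublyStochastic ℝ n) {y : n → ℝ}
    (hy : ∑ i, y i ^ 2 ≤ ∑ i, (W *ᵥ y) i ^ 2) {i j : n} (hij : 0 < W i j) :
    y j = (W *ᵥ y) i := by
  have hterm : ∀ k l, 0 ≤ W k l * (y l - (W *ᵥ y) k) ^ 2 := fun k l =>
    mul_nonneg (nonneg_of_mem_doublyStochastic hW) (sq_nonneg _)
  have hzero : ∑ i, ∑ j, W i j * (y j - (W *ᵥ y) i) ^ 2 = 0 :=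
    le_antisymm (by linarith [sum_sq_mulVec_add_sum_mul_sq_sub hW y])
      (sum_nonneg fun k _ => sum_nonneg fun l _ => hterm k l)
  rw [Fintype.sum_eq_zero_iff_of_nonneg fun k => sum_nonneg fun l _ => hterm k l] at hzero
  have := (Fintype.sum_eq_zero_iff_of_nonneg (hterm i)).mp (congrFun hzero i)
  simpa [hij.ne', sub_eq_zero] using congrFun this j

theorem sum_sq_mulVec_lt (hW : W ∈ doublyStochastic ℝ n) (hdiag : ∀ i, 0 < W i i)
    (hconn : (SimpleGraph.fromRel fun i j => 0 < W i j).Preconnected) {y : n → ℝ}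
    (hy : y ≠ 0) (hsum : ∑ i, y i = 0) :
    ∑ i, (W *ᵥ y) i ^ 2 < ∑ i, y i ^ 2 := by
  by_contra! hle
  have hfix : ∀ {i j}, 0 < W i j → y j = y i := fun hij =>
    (apply_eq_mulVec_apply_of_sum_sq_le hW hle hij).trans
      (apply_eq_mulVec_apply_of_sum_sq_le hW hle (hdiag _)).symm
  have hconst : ∀ a b, y a = y b := hconn.apply_eq_of_forall_adj fun a b hab => by
    rcases hab.2 with h | h
    exacts [(hfix h).symm, hfix h]
  obtain ⟨i₀, hi₀⟩ := Function.ne_iff.mp hy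
  have hcard : (Fintype.card n : ℝ) ≠ 0 :=
    Nat.cast_ne_zero.mpr (Fintype.card_pos_iff.mpr ⟨i₀⟩).ne'
  have hsum_const : (Fintype.card n : ℝ) * y i₀ = 0 := by
    simpa [hconst _ i₀] using hsum
  exact hi₀ ((mul_eq_zero.mp hsum_const).resolve_left hcard)

theorem sum_sq_sub_mulVec_lt (hW : W ∈ doublyStochastic ℝ n) (hdiag : ∀ i, 0 < W i i)
    (hconn : (SimpleGraph.fromRel fun i j => 0 < W i j).Preconnected) {x : n → ℝ} (hx : x ≠ 0) :
    ∑ i, ((W - (Fintype.card n : ℝ)⁻¹ • of fun _ _ => (1 : ℝ)) *ᵥ x) i ^ 2 < ∑ i, x i ^ 2 := by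
  rw [← mulVec_centered (mulVec_one_of_mem_doublyStochastic hW)]
  by_cases h0 : centered x = 0
  · simpa [h0] using sum_sq_pos_of_ne_zero hx
  · exact (sum_sq_mulVec_lt hW hdiag hconn h0 (sum_centered x)).trans_le (sum_sq_centered_le x)

end Matrix

theorem stmt0_general (N : ℕ) (W : Matrix (Fin N) (Fin N) ℝ)
    (hnonneg : ∀ i j, 0 ≤ W i j)
    (hdiag : ∀ i, 0 < W i i)
    (hrow : W.mulVec (fun _ => 1) = fun _ => 1)
    (hcol : Matrix.vecMul (fun _ => 1) W = fun _ => 1)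
    (hconn : (SimpleGraph.fromRel (fun i j : Fin N => 0 < W i j)).Connected) :
    ‖Matrix.toEuclideanCLM (𝕜 := ℝ)
        (W - (N : ℝ)⁻¹ • Matrix.of (fun _ _ : Fin N => (1 : ℝ)))‖ < 1 := by
  have hW : W ∈ doublyStochastic ℝ (Fin N) := ⟨hnonneg, hrow, hcol⟩
  refine ContinuousLinearMap.opNorm_lt_one_of_norm_apply_lt _ fun x hx => ?_
  rw [← sq_lt_sq₀ (norm_nonneg _) (norm_nonneg _), EuclideanSpace.real_norm_sq_eq,
    EuclideanSpace.real_norm_sq_eq, ofLp_toEuclideanCLM]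
  simpa only [Fintype.card_fin] using
    sum_sq_sub_mulVec_lt hW hdiag hconn.preconnected ((WithLp.ofLp_eq_zero 2).not.mpr hx)

/-- For an N×N symmetric doubly stochastic matrix W with positive
diagonal and connected associated graph, the spectral (L2 operator) norm of
W − (1/N)𝟙𝟙ᵀ is strictly less than 1. -/
theorem stmt0 (N : ℕ) (hN : 0 < N) (W : Matrix (Fin N) (Fin N) ℝ)
    (hsymm : Wᵀ = W)
    (hnonneg : ∀ i j, 0 ≤ W i j)
    (hdiag : ∀ i, 0 < W i i)
    (hrow : W.mulVec (fun _ => 1) = fun _ => 1)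
    (hcol : Matrix.vecMul (fun _ => 1) W = fun _ => 1)
    (hconn : (SimpleGraph.fromRel (fun i j : Fin N => 0 < W i j)).Connected) :
    ‖Matrix.toEuclideanCLM (𝕜 := ℝ)
        (W - (N : ℝ)⁻¹ • Matrix.of (fun _ _ : Fin N => (1 : ℝ)))‖ < 1 :=
  stmt0_general N W hnonneg hdiag hrow hcol hconn
end

section
/- Let W be an N×N symmetric doubly stochastic matrix with connected associated graph and positive diagonal, and let B be symmetric with B² = (1/2)(I_N − W). Then for λ ∈ ℝ^{Nm}, (B ⊗ I_m)λ = 0 if and only if λ = 𝟙_N ⊗ μ for some μ ∈ ℝ^m. -/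
/-!
Since `B` is real symmetric, `B v = 0 ↔ Bᵀ B v = 0 ↔ B² v = 0 ↔ W v = v`. A fixed vector of the
stochastic matrix `W` is constant by the maximum principle: at a vertex where `v` is maximal,
`v` is a convex combination of its values at the neighbours, so they are maximal too, and
connectivity spreads this to every vertex. Finally `(B ⊗ I_m) λ = 0` says exactly that each
slice `i ↦ λ (i, j)` lies in the kernel of `B`.
-/

open Matrix Kronecker

theorem SimpleGraph.Reachable.propagate {V : Type*} {G : SimpleGraph V} {p : V → Prop}
    (hp : ∀ u v, G.Adj u v → p u → p v) {u v : V} (h : G.Reachable u v) (hu : p u) : p v := by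
  obtain ⟨w⟩ := h
  induction w with
  | nil => exact hu
  | cons hadj _ ih => exact ih (hp _ _ hadj hu)

namespace Matrix

variable {ι R : Type*}

theorem kronecker_one_mulVec_apply {l n : Type*} [Semiring R] [Fintype l] [DecidableEq l]
    [Fintype n] (A : Matrix ι n R) (x : n × l → R) (i : ι) (j : l) :
    ((A ⊗ₖ (1 : Matrix l l R)) *ᵥ x) (i, j) = (A *ᵥ fun k => x (k, j)) i := by
  simp [mulVec, dotProduct, Fintype.sum_prod_type, one_apply, mul_ite]

theorem kronecker_one_mulVec_eq_zero_iff {l n : Type*} [Semiring R] [Fintype l]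
    [DecidableEq l] [Fintype n] (A : Matrix ι n R) (x : n × l → R) :
    (A ⊗ₖ (1 : Matrix l l R)) *ᵥ x = 0 ↔ ∀ j, A *ᵥ (fun k => x (k, j)) = 0 := by
  simp only [funext_iff, Prod.forall, kronecker_one_mulVec_apply, Pi.zero_apply]
  exact forall_comm

section StochasticMatrix

variable [Fintype ι] [Field R] [LinearOrder R] [IsStrictOrderedRing R] {W : Matrix ι ι R}

theorem apply_eq_of_mulVec_eq_self_of_le (hnonneg : ∀ i j, 0 ≤ W i j)
    (hrow : W *ᵥ (fun _ => 1) = fun _ => 1) {v : ι → R} (hv : W *ᵥ v = v) {a b : ι}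
    (hmax : ∀ k, v k ≤ v a) (hab : 0 < W a b) : v b = v a := by
  have hsum : ∑ k, W a k * v k = ∑ k, W a k * v a := by
    have hrow_a : ∑ k, W a k = 1 := by simpa [mulVec, dotProduct] using congrFun hrow a
    have hv_a : ∑ k, W a k * v k = v a := by simpa [mulVec, dotProduct] using congrFun hv a
    rw [hv_a, ← Finset.sum_mul, hrow_a, one_mul]
  have hle : ∀ k ∈ Finset.univ, W a k * v k ≤ W a k * v a :=
    fun k _ => mul_le_mul_of_nonneg_left (hmax k) (hnonneg a k)
  exact mul_left_cancel₀ hab.ne' <|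
    (Finset.sum_eq_sum_iff_of_le hle).1 hsum b (Finset.mem_univ b)

theorem mulVec_eq_self_iff_exists_const (hsymm : Wᵀ = W) (hnonneg : ∀ i j, 0 ≤ W i j)
    (hrow : W *ᵥ (fun _ => 1) = fun _ => 1)
    (hconn : (SimpleGraph.fromRel fun i j : ι => 0 < W i j).Connected) {v : ι → R} :
    W *ᵥ v = v ↔ ∃ c, v = fun _ => c := by
  constructor
  · intro hv
    have : Nonempty ι := hconn.nonempty
    obtain ⟨a, hmax⟩ := Finite.exists_max v
    refine ⟨v a, funext fun b => ?_⟩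
    refine (hconn a b).propagate (p := fun k => v k = v a) (fun k l hkl hk => ?_) rfl
    have hWkl : 0 < W k l := by
      rcases hkl.2 with h | h
      · exact h
      · rwa [← hsymm, transpose_apply]
    exact (apply_eq_of_mulVec_eq_self_of_le hnonneg hrow hv (hk ▸ hmax) hWkl).trans hk
  · rintro ⟨c, rfl⟩
    have hconst : (fun _ : ι => c) = c • fun _ => 1 := by ext; simp
    rw [hconst, mulVec_smul, hrow]

end StochasticMatrix

theorem mulVec_eq_zero_iff_exists_const [Fintype ι] [DecidableEq ι] {W B : Matrix ι ι ℝ}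
    (hsymm : Wᵀ = W) (hnonneg : ∀ i j, 0 ≤ W i j) (hrow : W *ᵥ (fun _ => 1) = fun _ => 1)
    (hconn : (SimpleGraph.fromRel fun i j : ι => 0 < W i j).Connected)
    (hBsymm : Bᵀ = B) (hB : B ^ 2 = (2 : ℝ)⁻¹ • (1 - W)) {v : ι → ℝ} :
    B *ᵥ v = 0 ↔ ∃ c, v = fun _ => c := by
  have hBB : Bᴴ * B = B ^ 2 := by rw [conjTranspose_eq_transpose_of_trivial, hBsymm, sq]
  rw [← conjTranspose_mul_self_mulVec_eq_zero, hBB, hB, smul_mulVec, sub_mulVec, one_mulVec,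
    smul_eq_zero_iff_right (by norm_num), sub_eq_zero, eq_comm,
    mulVec_eq_self_iff_exists_const hsymm hnonneg hrow hconn]

end Matrix

theorem stmt2_general (N m : ℕ) (W B : Matrix (Fin N) (Fin N) ℝ)
    (hsymm : Wᵀ = W)
    (hnonneg : ∀ i j, 0 ≤ W i j)
    (hrow : W.mulVec (fun _ => 1) = fun _ => 1)
    (hconn : (SimpleGraph.fromRel (fun i j : Fin N => 0 < W i j)).Connected)
    (hBsymm : Bᵀ = B)
    (hB : B ^ 2 = (2 : ℝ)⁻¹ • (1 - W))
    (lam : Fin N × Fin m → ℝ) :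
    (B ⊗ₖ (1 : Matrix (Fin m) (Fin m) ℝ)).mulVec lam = 0 ↔
      ∃ μ : Fin m → ℝ, lam = fun p => μ p.2 := by
  simp only [kronecker_one_mulVec_eq_zero_iff,
    mulVec_eq_zero_iff_exists_const hsymm hnonneg hrow hconn hBsymm hB, Classical.skolem]
  simp only [funext_iff, Prod.forall]
  exact exists_congr fun _ => forall_comm

/-- For W symmetric doubly stochastic with positive diagonal and
connected graph, and B symmetric with B² = (1/2)(I − W), one has
(B ⊗ I_m)λ = 0 iff λ = 𝟙_N ⊗ μ for some μ ∈ ℝ^m. -/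
theorem stmt2 (N m : ℕ) (hN : 0 < N) (W B : Matrix (Fin N) (Fin N) ℝ)
    (hsymm : Wᵀ = W)
    (hnonneg : ∀ i j, 0 ≤ W i j)
    (hdiag : ∀ i, 0 < W i i)
    (hrow : W.mulVec (fun _ => 1) = fun _ => 1)
    (hcol : Matrix.vecMul (fun _ => 1) W = fun _ => 1)
    (hconn : (SimpleGraph.fromRel (fun i j : Fin N => 0 < W i j)).Connected)
    (hBsymm : Bᵀ = B)
    (hB : B ^ 2 = (2 : ℝ)⁻¹ • (1 - W))
    (lam : Fin N × Fin m → ℝ) :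
    (B ⊗ₖ (1 : Matrix (Fin m) (Fin m) ℝ)).mulVec lam = 0 ↔
      ∃ μ : Fin m → ℝ, lam = fun p => μ p.2 :=
  stmt2_general N m W B hsymm hnonneg hrow hconn hBsymm hB lam
end

section
/- Let W be symmetric doubly stochastic with connected associated graph and positive diagonal, W_∞ := (𝟙𝟙ᵀ/N) ⊗ I_n, 𝒲 := W ⊗ I_n, and σ := ‖W − 𝟙𝟙ᵀ/N‖ < 1. Then for any x ∈ ℝ^{Nn} and x* in the range of W_∞: (i) ‖𝒲x − x*‖² = ‖W_∞x − x*‖² + ‖𝒲x_⊥‖², where x_⊥ := (I − W_∞)x; and (ii) ‖𝒲x_⊥‖ ≤ σ‖x_⊥‖. -/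
/-! Write `J = 𝟙𝟙ᵀ/N`, so that `𝒲 = W ⊗ I` and `W_∞ = J ⊗ I`. Double stochasticity gives
`WJ = JW = J`, so the orthogonal projection `P = W_∞` absorbs `𝒲` on both sides. Then
`𝒲x - x* = (Px - x*) + 𝒲x_⊥`, where the first summand lies in the range of `P` and the second in
its kernel, and (i) is Pythagoras. For (ii), `Px_⊥ = 0` turns `𝒲x_⊥` into `((W - J) ⊗ I)x_⊥`,
and `A ⊗ I` acts on each of the `n` coordinate slices of a vector by `A`, so its operator norm is
at most that of `A`. -/

open Matrix Kronecker

section Kronecker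

variable {R 𝕜 m ι : Type*} [Fintype m] [Fintype ι]

theorem Matrix.kronecker_one_mulVec_apply_s4 [DecidableEq ι] [CommSemiring R] (A : Matrix m m R)
    (y : m × ι → R) (i : m) (k : ι) :
    ((A ⊗ₖ (1 : Matrix ι ι R)) *ᵥ y) (i, k) = (A *ᵥ fun j => y (j, k)) i := by
  rw [show y = vec (of fun k i => y (i, k)) from rfl, kronecker_mulVec_vec]
  simp [mulVec, dotProduct, mul_apply, mul_comm]

variable [RCLike 𝕜]

theorem EuclideanSpace.norm_sq_eq_sum_norm_sq_slice (y : EuclideanSpace 𝕜 (m × ι)) :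
    ‖y‖ ^ 2 = ∑ k, ‖(WithLp.toLp 2 fun i => y (i, k) : EuclideanSpace 𝕜 m)‖ ^ 2 := by
  simp only [EuclideanSpace.norm_sq_eq, Fintype.sum_prod_type]
  exact Finset.sum_comm

theorem Matrix.norm_toEuclideanCLM_kronecker_one_le [DecidableEq m] [DecidableEq ι]
    (A : Matrix m m 𝕜) :
    ‖toEuclideanCLM (𝕜 := 𝕜) (A ⊗ₖ (1 : Matrix ι ι 𝕜))‖ ≤ ‖toEuclideanCLM (𝕜 := 𝕜) A‖ := by
  refine ContinuousLinearMap.opNorm_le_bound _ (norm_nonneg _) fun y => ?_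
  set T := toEuclideanCLM (𝕜 := 𝕜) A
  have hslice : ∀ k, (WithLp.toLp 2 fun i => toEuclideanCLM (𝕜 := 𝕜) (A ⊗ₖ 1) y (i, k)) =
      T (WithLp.toLp 2 fun i => y (i, k)) := fun k => by
    ext i
    exact kronecker_one_mulVec_apply_s4 A _ i k
  refine le_of_sq_le_sq ?_ (by positivity)
  calc ‖toEuclideanCLM (𝕜 := 𝕜) (A ⊗ₖ 1) y‖ ^ 2
      = ∑ k, ‖T (WithLp.toLp 2 fun i => y (i, k))‖ ^ 2 := by
        simp only [EuclideanSpace.norm_sq_eq_sum_norm_sq_slice, hslice]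
    _ ≤ ∑ k, (‖T‖ * ‖(WithLp.toLp 2 fun i => y (i, k) : EuclideanSpace 𝕜 m)‖) ^ 2 :=
        Finset.sum_le_sum fun k _ => pow_le_pow_left₀ (norm_nonneg _) (T.le_opNorm _) 2
    _ = (‖T‖ * ‖y‖) ^ 2 := by
        simp only [mul_pow, ← Finset.mul_sum, EuclideanSpace.norm_sq_eq_sum_norm_sq_slice y]

end Kronecker

section Ones

variable {R m : Type*} [Fintype m]

theorem Matrix.mul_ones_of_mulVec_one [NonAssocSemiring R] {W : Matrix m m R}
    (h : W *ᵥ (fun _ => 1) = fun _ => 1) :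
    W * of (fun _ _ : m => (1 : R)) = of fun _ _ => 1 := by
  ext i j
  simpa [mulVec, dotProduct, mul_apply] using congrFun h i

theorem Matrix.ones_mul_of_vecMul_one [NonAssocSemiring R] {W : Matrix m m R}
    (h : (fun _ => 1) ᵥ* W = fun _ => 1) :
    of (fun _ _ : m => (1 : R)) * W = of fun _ _ => 1 := by
  ext i j
  simpa [vecMul, dotProduct, mul_apply] using congrFun h j

theorem Matrix.isStarProjection_inv_card_smul_ones [Field R] [CharZero R] [StarRing R]
    [TrivialStar R] :
    IsStarProjection ((Fintype.card m : R)⁻¹ • of fun _ _ : m => (1 : R)) := by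
  refine ⟨?_, ?_⟩
  · ext i j
    have : Nonempty m := ⟨i⟩
    have : (Fintype.card m : R) ≠ 0 := Nat.cast_ne_zero.mpr Fintype.card_ne_zero
    simp [mul_apply]
  · ext i j
    simp

theorem IsStarProjection.kronecker {l : Type*} [Fintype l] [CommSemiring R] [StarRing R]
    {p : Matrix m m R} {q : Matrix l l R} (hp : IsStarProjection p) (hq : IsStarProjection q) :
    IsStarProjection (p ⊗ₖ q) where
  isIdempotentElem := by
    rw [IsIdempotentElem, ← mul_kronecker_mul, hp.isIdempotentElem.eq, hq.isIdempotentElem.eq]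
  isSelfAdjoint := by
    rw [IsSelfAdjoint, star_eq_conjTranspose, conjTranspose_kronecker, ← star_eq_conjTranspose,
      ← star_eq_conjTranspose, hp.isSelfAdjoint.star_eq, hq.isSelfAdjoint.star_eq]

end Ones

theorem IsIdempotentElem.apply_sub_apply_self {R M : Type*} [Ring R] [AddCommGroup M] [Module R M]
    [TopologicalSpace M] {P : M →L[R] M} (hP : IsIdempotentElem P) (x : M) :
    P (x - P x) = 0 := by
  rw [map_sub, sub_eq_zero]
  exact (DFunLike.congr_fun hP x).symm

section Projection

variable {𝕜 E : Type*} [RCLike 𝕜] [NormedAddCommGroup E] [InnerProductSpace 𝕜 E]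
  [CompleteSpace E]

theorem IsSelfAdjoint.inner_eq_zero_of_apply_eq_self_of_apply_eq_zero {P : E →L[𝕜] E}
    (hP : IsSelfAdjoint P) {u v : E} (hu : P u = u) (hv : P v = 0) : inner 𝕜 u v = 0 :=
  calc inner 𝕜 u v = inner 𝕜 (P u) v := by rw [hu]
    _ = inner 𝕜 u (P v) := hP.isSymmetric u v
    _ = 0 := by rw [hv, inner_zero_right]

theorem IsStarProjection.norm_apply_sub_sq_eq {P K : E →L[𝕜] E} (hP : IsStarProjection P)
    (hKP : K * P = P) (hPK : P * K = P) (x : E) {x₀ : E} (hx₀ : P x₀ = x₀) :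
    ‖K x - x₀‖ ^ 2 = ‖P x - x₀‖ ^ 2 + ‖K (x - P x)‖ ^ 2 := by
  have hdecomp : K x - x₀ = (P x - x₀) + K (x - P x) := by
    rw [map_sub K, show K (P x) = P x from DFunLike.congr_fun hKP x]
    abel
  have horth : inner 𝕜 (P x - x₀) (K (x - P x)) = 0 := by
    refine hP.isSelfAdjoint.inner_eq_zero_of_apply_eq_self_of_apply_eq_zero ?_ ?_
    · rw [map_sub, hx₀, ← mul_apply_eq_comp, hP.isIdempotentElem.eq]
    · rw [← mul_apply_eq_comp, hPK, hP.isIdempotentElem.apply_sub_apply_self]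
  rw [hdecomp, sq, sq, sq, norm_add_sq_eq_norm_sq_add_norm_sq_of_inner_eq_zero _ _ horth]

end Projection

theorem stmt4_general (N n : ℕ) (W : Matrix (Fin N) (Fin N) ℝ)
    (hrow : W.mulVec (fun _ => 1) = fun _ => 1)
    (hcol : Matrix.vecMul (fun _ => 1) W = fun _ => 1)
    (σ : ℝ)
    (hσdef : σ = ‖Matrix.toEuclideanCLM (𝕜 := ℝ)
        (W - (N : ℝ)⁻¹ • Matrix.of (fun _ _ : Fin N => (1 : ℝ)))‖)
    (Wk Winf : Matrix (Fin N × Fin n) (Fin N × Fin n) ℝ)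
    (hWk : Wk = W ⊗ₖ (1 : Matrix (Fin n) (Fin n) ℝ))
    (hWinf : Winf = ((N : ℝ)⁻¹ • Matrix.of (fun _ _ : Fin N => (1 : ℝ))) ⊗ₖ
        (1 : Matrix (Fin n) (Fin n) ℝ))
    (x xstar : EuclideanSpace ℝ (Fin N × Fin n))
    (hstar : Matrix.toEuclideanCLM (𝕜 := ℝ) Winf xstar = xstar)
    (xperp : EuclideanSpace ℝ (Fin N × Fin n))
    (hperp : xperp = x - Matrix.toEuclideanCLM (𝕜 := ℝ) Winf x) :
    ‖Matrix.toEuclideanCLM (𝕜 := ℝ) Wk x - xstar‖ ^ 2 =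
        ‖Matrix.toEuclideanCLM (𝕜 := ℝ) Winf x - xstar‖ ^ 2 +
        ‖Matrix.toEuclideanCLM (𝕜 := ℝ) Wk xperp‖ ^ 2 ∧
      ‖Matrix.toEuclideanCLM (𝕜 := ℝ) Wk xperp‖ ≤ σ * ‖xperp‖ := by
  subst hWk hWinf hperp
  set J : Matrix (Fin N) (Fin N) ℝ := (N : ℝ)⁻¹ • of fun _ _ => 1
  have hJ : IsStarProjection J := by
    have := isStarProjection_inv_card_smul_ones (R := ℝ) (m := Fin N)
    rwa [Fintype.card_fin] at this
  set P := toEuclideanCLM (𝕜 := ℝ) (J ⊗ₖ (1 : Matrix (Fin n) (Fin n) ℝ)) with hP_def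
  set K := toEuclideanCLM (𝕜 := ℝ) (W ⊗ₖ (1 : Matrix (Fin n) (Fin n) ℝ)) with hK_def
  have hP : IsStarProjection P := (hJ.kronecker (IsStarProjection.one _)).map _
  have hKP : K * P = P := by
    rw [hP_def, hK_def, ← map_mul, ← mul_kronecker_mul, Matrix.mul_smul,
      mul_ones_of_mulVec_one hrow, one_mul]
  have hPK : P * K = P := by
    rw [hP_def, hK_def, ← map_mul, ← mul_kronecker_mul, Matrix.smul_mul,
      ones_mul_of_vecMul_one hcol, one_mul]
  set D := toEuclideanCLM (𝕜 := ℝ) ((W - J) ⊗ₖ (1 : Matrix (Fin n) (Fin n) ℝ)) with hD_def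
  have hK_split : K = D + P := by
    rw [hD_def, hP_def, hK_def, ← map_add, ← add_kronecker, sub_add_cancel]
  refine ⟨hP.norm_apply_sub_sq_eq hKP hPK x hstar, ?_⟩
  calc ‖K (x - P x)‖ = ‖D (x - P x)‖ := by
        rw [hK_split, _root_.add_apply, hP.isIdempotentElem.apply_sub_apply_self, add_zero]
    _ ≤ ‖D‖ * ‖x - P x‖ := D.le_opNorm _
    _ ≤ σ * ‖x - P x‖ := by
        rw [hσdef]
        gcongr
        exact norm_toEuclideanCLM_kronecker_one_le _

/-- With Wk = W ⊗ I_n, W_∞ = (𝟙𝟙ᵀ/N) ⊗ I_n,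
σ = ‖W − 𝟙𝟙ᵀ/N‖ < 1 (L2 operator norm), x* fixed by W_∞ and
x_⊥ = x − W_∞x, one has ‖Wkx − x*‖² = ‖W_∞x − x*‖² + ‖Wkx_⊥‖² and
‖Wkx_⊥‖ ≤ σ‖x_⊥‖. -/
theorem stmt4 (N n : ℕ) (hN : 0 < N) (W : Matrix (Fin N) (Fin N) ℝ)
    (hsymm : Wᵀ = W)
    (hnonneg : ∀ i j, 0 ≤ W i j)
    (hdiag : ∀ i, 0 < W i i)
    (hrow : W.mulVec (fun _ => 1) = fun _ => 1)
    (hcol : Matrix.vecMul (fun _ => 1) W = fun _ => 1)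
    (hconn : (SimpleGraph.fromRel (fun i j : Fin N => 0 < W i j)).Connected)
    (σ : ℝ)
    (hσdef : σ = ‖Matrix.toEuclideanCLM (𝕜 := ℝ)
        (W - (N : ℝ)⁻¹ • Matrix.of (fun _ _ : Fin N => (1 : ℝ)))‖)
    (hσlt : σ < 1)
    (Wk Winf : Matrix (Fin N × Fin n) (Fin N × Fin n) ℝ)
    (hWk : Wk = W ⊗ₖ (1 : Matrix (Fin n) (Fin n) ℝ))
    (hWinf : Winf = ((N : ℝ)⁻¹ • Matrix.of (fun _ _ : Fin N => (1 : ℝ))) ⊗ₖ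
        (1 : Matrix (Fin n) (Fin n) ℝ))
    (x xstar : EuclideanSpace ℝ (Fin N × Fin n))
    (hstar : Matrix.toEuclideanCLM (𝕜 := ℝ) Winf xstar = xstar)
    (xperp : EuclideanSpace ℝ (Fin N × Fin n))
    (hperp : xperp = x - Matrix.toEuclideanCLM (𝕜 := ℝ) Winf x) :
    ‖Matrix.toEuclideanCLM (𝕜 := ℝ) Wk x - xstar‖ ^ 2 =
        ‖Matrix.toEuclideanCLM (𝕜 := ℝ) Winf x - xstar‖ ^ 2 +
        ‖Matrix.toEuclideanCLM (𝕜 := ℝ) Wk xperp‖ ^ 2 ∧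
      ‖Matrix.toEuclideanCLM (𝕜 := ℝ) Wk xperp‖ ≤ σ * ‖xperp‖ :=
  stmt4_general N n W hrow hcol σ hσdef Wk Winf hWk hWinf x xstar hstar xperp hperp
end

section
/- (Lemma 3 energy identity) Suppose ṽ_{k+1} = λ̃_k − ℬ²λ̃_k + βΠ(x_{k+1} − x*) + ℬỹ_k and ỹ_{k+1} = ỹ_k − γℬṽ_{k+1}, where ℬ is symmetric. Then ‖ṽ_{k+1}‖²_{I−γℬ²} + γ⁻¹‖ỹ_{k+1}‖² = ‖λ̃_k − ℬ²λ̃_k + βΠ(x_{k+1} − x*)‖² − ‖ℬỹ_k‖² + γ⁻¹‖ỹ_k‖². -/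
/-!
Write `v = a + ℬy` and `y₊ = y - γℬv`. Expanding both quadratic forms, the two `γ‖ℬv‖²` terms
cancel and the cross terms combine, via symmetry of `ℬ`, into `‖v‖² - 2⟨ℬy, v⟩ + γ⁻¹‖y‖²`;
completing the square in `v = a + ℬy` turns this into `‖a‖² - ‖ℬy‖² + γ⁻¹‖y‖²`.
-/

open Matrix

section EnergyIdentity

variable {𝕜 m : Type*} [Fintype m]

theorem dotProduct_mulVec_of_transpose_eq [CommSemiring 𝕜] {B : Matrix m m 𝕜} (hB : Bᵀ = B)
    (u w : m → 𝕜) : u ⬝ᵥ B *ᵥ w = B *ᵥ u ⬝ᵥ w := by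
  rw [dotProduct_mulVec, ← mulVec_transpose, hB, dotProduct_comm]

theorem dotProduct_one_sub_smul_mul_self_mulVec [CommRing 𝕜] [DecidableEq m]
    {B : Matrix m m 𝕜} (hB : Bᵀ = B) (γ : 𝕜) (v : m → 𝕜) :
    v ⬝ᵥ (1 - γ • (B * B)) *ᵥ v = v ⬝ᵥ v - γ * (B *ᵥ v ⬝ᵥ B *ᵥ v) := by
  rw [sub_mulVec, one_mulVec, smul_mulVec, ← mulVec_mulVec, dotProduct_sub, dotProduct_smul,
    dotProduct_mulVec_of_transpose_eq hB, smul_eq_mul]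

theorem inv_mul_dotProduct_sub_smul_self [Field 𝕜] {γ : 𝕜} (hγ : γ ≠ 0) (y w : m → 𝕜) :
    γ⁻¹ * ((y - γ • w) ⬝ᵥ (y - γ • w)) = γ⁻¹ * (y ⬝ᵥ y) - 2 * (y ⬝ᵥ w) + γ * (w ⬝ᵥ w) := by
  simp only [dotProduct_sub, sub_dotProduct, dotProduct_smul, smul_dotProduct, smul_eq_mul,
    dotProduct_comm w y]
  field_simp
  ring

theorem dotProduct_add_self_sub_two_mul [CommRing 𝕜] (a b : m → 𝕜) :
    (a + b) ⬝ᵥ (a + b) - 2 * (b ⬝ᵥ (a + b)) = a ⬝ᵥ a - b ⬝ᵥ b := by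
  simp only [dotProduct_add, add_dotProduct, dotProduct_comm b a]
  ring

theorem energy_identity [Field 𝕜] [DecidableEq m] {B : Matrix m m 𝕜} (hB : Bᵀ = B)
    {γ : 𝕜} (hγ : γ ≠ 0) (a y : m → 𝕜) :
    (a + B *ᵥ y) ⬝ᵥ (1 - γ • (B * B)) *ᵥ (a + B *ᵥ y)
        + γ⁻¹ * ((y - γ • B *ᵥ (a + B *ᵥ y)) ⬝ᵥ (y - γ • B *ᵥ (a + B *ᵥ y))) =
      a ⬝ᵥ a - B *ᵥ y ⬝ᵥ B *ᵥ y + γ⁻¹ * (y ⬝ᵥ y) := by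
  rw [dotProduct_one_sub_smul_mul_self_mulVec hB, inv_mul_dotProduct_sub_smul_self hγ,
    dotProduct_mulVec_of_transpose_eq hB y, ← dotProduct_add_self_sub_two_mul a (B *ᵥ y)]
  ring

end EnergyIdentity

theorem stmt9_general (p n : ℕ) (B : Matrix (Fin p) (Fin p) ℝ) (hBsymm : Bᵀ = B)
    (Pi : Matrix (Fin p) (Fin n) ℝ) (β γ : ℝ) (hγ : 0 < γ)
    (lamt yt vnew ynew : Fin p → ℝ) (xnew xstar : Fin n → ℝ)
    (hv : vnew = lamt - (B * B).mulVec lamt + β • Pi.mulVec (xnew - xstar)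
        + B.mulVec yt)
    (hy : ynew = yt - γ • B.mulVec vnew) :
    dotProduct vnew ((1 - γ • (B * B)).mulVec vnew)
        + γ⁻¹ * dotProduct ynew ynew =
      dotProduct (lamt - (B * B).mulVec lamt + β • Pi.mulVec (xnew - xstar))
          (lamt - (B * B).mulVec lamt + β • Pi.mulVec (xnew - xstar))
        - dotProduct (B.mulVec yt) (B.mulVec yt)
        + γ⁻¹ * dotProduct yt yt := by
  subst hy hv
  exact energy_identity hBsymm hγ.ne' _ yt

/-- Lemma 3 energy identity: if
ṽ₊ = λ̃ − ℬ²λ̃ + βΠ(x₊ − x*) + ℬỹ and ỹ₊ = ỹ − γℬṽ₊ with ℬ symmetric, then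
‖ṽ₊‖²_{I−γℬ²} + γ⁻¹‖ỹ₊‖² = ‖λ̃ − ℬ²λ̃ + βΠ(x₊ − x*)‖² − ‖ℬỹ‖² + γ⁻¹‖ỹ‖²,
where ‖z‖²_M = zᵀMz and ‖z‖² = zᵀz. -/
theorem stmt9 (p n : ℕ) (B : Matrix (Fin p) (Fin p) ℝ) (hBsymm : Bᵀ = B)
    (Pi : Matrix (Fin p) (Fin n) ℝ) (β γ : ℝ) (hβ : 0 < β) (hγ : 0 < γ)
    (hPSD : (1 - γ • (B * B)).PosSemidef)
    (lamt yt vnew ynew : Fin p → ℝ) (xnew xstar : Fin n → ℝ)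
    (hv : vnew = lamt - (B * B).mulVec lamt + β • Pi.mulVec (xnew - xstar)
        + B.mulVec yt)
    (hy : ynew = yt - γ • B.mulVec vnew) :
    dotProduct vnew ((1 - γ • (B * B)).mulVec vnew)
        + γ⁻¹ * dotProduct ynew ynew =
      dotProduct (lamt - (B * B).mulVec lamt + β • Pi.mulVec (xnew - xstar))
          (lamt - (B * B).mulVec lamt + β • Pi.mulVec (xnew - xstar))
        - dotProduct (B.mulVec yt) (B.mulVec yt)
        + γ⁻¹ * dotProduct yt yt :=
  stmt9_general p n B hBsymm Pi β γ hγ lamt yt vnew ynew xnew xstar hv hy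
end

section
/- Let M_α be the symmetric 2×2 matrix with entries M_α(1,1) = 1 − (μ/N)α + L²α², M_α(1,2) = M_α(2,1) = (σ+1)Lα, M_α(2,2) = σ² + 3σLα + L²α², where 0 < μ ≤ L, N ≥ 1, and 0 ≤ σ < 1. If 0 < α < min{(1−σ²)/(9σL), √(1−σ²)/(√3 L), μ(1−σ)/(6NL²)}, then the spectral radius ρ(M_α) < 1. -/
/-!
Both eigenvalues of a real 2×2 matrix are roots of `p(x) = x² - t x + d` (trace `t`, determinant
`d`), and such a root lies in `(-1, 1)` as soon as `p(1) > 0`, `p(-1) > 0` and `|t| < 2` (the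
Schur–Cohn–Jury test). For `M_α = [[a, b], [b, c]]` we have `p(±1) = (1 ∓ a)(1 ∓ c) - b²`. With
`r = (μ/N)α` and `s = Lα` the bound `α < μ(1-σ)/(6NL²)` reads `6s² < r(1-σ)`, which forces
`s < (1-σ)/6`. Then `1 - a ≥ 5r/6`, `1 - c > (23/36)(1-σ²)` and `b² < r(1-σ²)/3` give `p(1) > 0`;
the other two conditions hold because `a` is close to `1` and `b`, `c` are small.
-/

open Matrix

theorem Matrix.sq_sub_trace_mul_add_det_eq_zero_of_mem_spectrum {K : Type*} [Field K]
    {A : Matrix (Fin 2) (Fin 2) K} {x : K} (hx : x ∈ spectrum K A) :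
    x ^ 2 - A.trace * x + A.det = 0 := by
  simpa [charpoly_fin_two] using (mem_spectrum_iff_isRoot_charpoly.mp hx).eq_zero

theorem abs_lt_one_of_sq_sub_mul_add_eq_zero {t d x : ℝ} (hx : x ^ 2 - t * x + d = 0)
    (hp : 0 < 1 - t + d) (hm : 0 < 1 + t + d) (ht : |t| < 2) : |x| < 1 := by
  rw [abs_lt] at ht ⊢
  constructor
  · by_contra! h
    nlinarith
  · by_contra! h
    nlinarith

theorem Matrix.abs_lt_one_of_mem_spectrum_fin_two {A : Matrix (Fin 2) (Fin 2) ℝ} {x : ℝ}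
    (hx : x ∈ spectrum ℝ A) (hp : 0 < 1 - A.trace + A.det) (hm : 0 < 1 + A.trace + A.det)
    (ht : |A.trace| < 2) : |x| < 1 :=
  abs_lt_one_of_sq_sub_mul_add_eq_zero (sq_sub_trace_mul_add_det_eq_zero_of_mem_spectrum hx)
    hp hm ht

/-- The matrix `M_α` of the statement, with `r = (μ/N)α` and `s = Lα`. -/
def iterMatrix (r s σ : ℝ) : Matrix (Fin 2) (Fin 2) ℝ :=
  !![1 - r + s ^ 2, (σ + 1) * s; (σ + 1) * s, σ ^ 2 + 3 * σ * s + s ^ 2]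

section IterMatrix

variable {r s σ : ℝ}

theorem six_mul_lt_one_sub (hrs : r ≤ s) (hσ1 : σ < 1) (h : 6 * s ^ 2 < r * (1 - σ)) :
    6 * s < 1 - σ := by
  nlinarith

theorem one_sub_trace_add_det_iterMatrix_pos (hrs : r ≤ s) (hσ0 : 0 ≤ σ) (hσ1 : σ < 1)
    (h : 6 * s ^ 2 < r * (1 - σ)) :
    0 < 1 - (iterMatrix r s σ).trace + (iterMatrix r s σ).det := by
  have hs := six_mul_lt_one_sub hrs hσ1 h
  have hdiag₁ : 5 / 6 * r ≤ 1 - (1 - r + s ^ 2) := by nlinarith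
  have hdiag₂ : 23 / 36 * (1 - σ ^ 2) < 1 - (σ ^ 2 + 3 * σ * s + s ^ 2) := by nlinarith
  have hoff : ((σ + 1) * s) ^ 2 < 1 / 3 * (r * (1 - σ ^ 2)) := by nlinarith
  have hpos : 0 < (1 - (1 - r + s ^ 2)) * (1 - (σ ^ 2 + 3 * σ * s + s ^ 2))
      - ((σ + 1) * s) ^ 2 := by nlinarith
  simp only [iterMatrix, trace_fin_two_of, det_fin_two_of]
  exact hpos.trans_eq (by ring)

theorem one_add_trace_add_det_iterMatrix_pos (hrs : r ≤ s) (hσ0 : 0 ≤ σ) (hσ1 : σ < 1)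
    (h : 6 * s ^ 2 < r * (1 - σ)) :
    0 < 1 + (iterMatrix r s σ).trace + (iterMatrix r s σ).det := by
  have hs := six_mul_lt_one_sub hrs hσ1 h
  have hs0 : 0 < s := by nlinarith
  have hdiag₁ : 11 / 6 < 1 + (1 - r + s ^ 2) := by nlinarith
  have hdiag₂ : 1 ≤ 1 + (σ ^ 2 + 3 * σ * s + s ^ 2) := by nlinarith
  have hoff : ((σ + 1) * s) ^ 2 < (1 / 3) ^ 2 :=
    pow_lt_pow_left₀ (by nlinarith) (by positivity) two_ne_zero
  have hpos : 0 < (1 + (1 - r + s ^ 2)) * (1 + (σ ^ 2 + 3 * σ * s + s ^ 2))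
      - ((σ + 1) * s) ^ 2 := by nlinarith
  simp only [iterMatrix, trace_fin_two_of, det_fin_two_of]
  exact hpos.trans_eq (by ring)

theorem abs_trace_iterMatrix_lt_two (hrs : r ≤ s) (hσ0 : 0 ≤ σ) (hσ1 : σ < 1)
    (h : 6 * s ^ 2 < r * (1 - σ)) :
    |(iterMatrix r s σ).trace| < 2 := by
  have hs := six_mul_lt_one_sub hrs hσ1 h
  have hs0 : 0 < s := by nlinarith
  simp only [iterMatrix, trace_fin_two_of, abs_lt]
  constructor <;> nlinarith [mul_lt_mul_of_pos_left hs hs0, mul_le_mul_of_nonneg_left hs.le hσ0]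

theorem abs_lt_one_of_mem_spectrum_iterMatrix (hrs : r ≤ s) (hσ0 : 0 ≤ σ) (hσ1 : σ < 1)
    (h : 6 * s ^ 2 < r * (1 - σ)) {x : ℝ} (hx : x ∈ spectrum ℝ (iterMatrix r s σ)) :
    |x| < 1 :=
  abs_lt_one_of_mem_spectrum_fin_two hx (one_sub_trace_add_det_iterMatrix_pos hrs hσ0 hσ1 h)
    (one_add_trace_add_det_iterMatrix_pos hrs hσ0 hσ1 h)
    (abs_trace_iterMatrix_lt_two hrs hσ0 hσ1 h)

end IterMatrix

/-- with 0 < μ ≤ L, N ≥ 1, 0 < σ < 1 and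
0 < α < min{(1−σ²)/(9σL), √(1−σ²)/(√3 L), μ(1−σ)/(6NL²)},
the symmetric 2×2 matrix M_α with entries
M_α = [[1 − (μ/N)α + L²α², (σ+1)Lα], [(σ+1)Lα, σ² + 3σLα + L²α²]]
has spectral radius ρ(M_α) < 1 (all eigenvalues have absolute value < 1). -/
theorem stmt12 (μ L σ α : ℝ) (N : ℕ) (hμ : 0 < μ) (hμL : μ ≤ L)
    (hN : 1 ≤ N) (hσ0 : 0 < σ) (hσ1 : σ < 1) (hα0 : 0 < α)
    (hα : α < min ((1 - σ ^ 2) / (9 * σ * L))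
      (min (Real.sqrt (1 - σ ^ 2) / (Real.sqrt 3 * L))
        (μ * (1 - σ) / (6 * N * L ^ 2)))) :
    ∀ lam ∈ spectrum ℝ
      (!![1 - (μ / N) * α + L ^ 2 * α ^ 2, (σ + 1) * L * α;
          (σ + 1) * L * α, σ ^ 2 + 3 * σ * L * α + L ^ 2 * α ^ 2] :
        Matrix (Fin 2) (Fin 2) ℝ), |lam| < 1 := by
  intro lam hlam
  have hN0 : (0 : ℝ) < N := Nat.cast_pos.mpr hN
  have hL : 0 < L := hμ.trans_le hμL
  have hαμ : 6 * N * L ^ 2 * α < μ * (1 - σ) :=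
    (lt_div_iff₀' (by positivity)).mp (hα.trans_le ((min_le_right _ _).trans (min_le_right _ _)))
  have hrs : μ / N * α ≤ L * α := by
    gcongr
    exact (div_le_self hμ.le (Nat.one_le_cast.mpr hN)).trans hμL
  have h : 6 * (L * α) ^ 2 < μ / N * α * (1 - σ) := by
    calc 6 * (L * α) ^ 2 = 6 * N * L ^ 2 * α * α / N := by field_simp
      _ < μ * (1 - σ) * α / N := by gcongr
      _ = μ / N * α * (1 - σ) := by ring
  refine abs_lt_one_of_mem_spectrum_iterMatrix hrs hσ0.le hσ1 h ?_
  convert hlam using 2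
  ext i j
  fin_cases i <;> fin_cases j <;> simp [iterMatrix] <;> ring
end
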